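/- The assignment Y_{ii} ↦ X_{ii} extends to a well-defined k-algebra homomorphism r⁺ : O_q(T) → O_q(B⁺); r⁺ is injective, its image is the subalgebra L⁺ of O_q(B⁺) generated by {X_{ii}, X_{ii}⁻¹ : 1 ≤ i ≤ n+1}, and p⁺ ∘ r⁺ = id_{O_q(T)}, where p⁺ : O_q(B⁺) → O_q(T) is the canonical projection (p⁺(X_{ii}) = Y_{ii} and p⁺(X_{ij}) = 0 for i < j). -/

import Mathlib

/-!
A family `d` of pairwise commuting elements of an algebra with `d 0 * ⋯ * d n = 1` is a point
of the torus: `X i j ↦ δ_ij d i` respects every defining relation of `O_q(SL_{n+1})` (in the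
only relation with two diagonal factors, the mixed one, the correction term `X i m * X l j` is
off-diagonal) and kills the `X i j` with `i ≠ j`, so it factors through `O_q(T)`. In `O_q(B⁺)`
the diagonal generators commute (the mixed relation for `X i i`, `X j j` with `X j i = 0`), and
the quantum determinant collapses to `X 0 0 * ⋯ * X n n = 1`, since every permutation `σ ≠ 1`
has some `σ i < i`. This gives `r⁺`; `p⁺ ∘ r⁺ = id` on generators, so `r⁺` is injective,
and `X i i⁻¹` is the product of the other diagonal generators, so it lies in the image.
-/

open scoped TensorProduct

noncomputable section

namespace QSL

/-- The generator `X i j` of the free algebra underlying `O_q(SL_{n+1})`. -/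
def Xf (k : Type) [Field k] (n : ℕ) (i j : Fin (n+1)) :
    FreeAlgebra k (Fin (n+1) × Fin (n+1)) :=
  FreeAlgebra.ι k (i, j)

/-- The number of inversions (the length `ℓ(σ)`) of a permutation. -/
def invCount {m : ℕ} (σ : Equiv.Perm (Fin m)) : ℕ :=
  (Finset.univ.filter (fun p : Fin m × Fin m => p.1 < p.2 ∧ σ p.2 < σ p.1)).card

/-- The quantum determinant `∑_σ (-q)^{ℓ(σ)} X_{1σ(1)} ⋯ X_{n+1,σ(n+1)}`. -/
def qdet (k : Type) [Field k] (q : k) (n : ℕ) : FreeAlgebra k (Fin (n+1) × Fin (n+1)) :=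
  ∑ σ : Equiv.Perm (Fin (n+1)),
    ((-q) ^ invCount σ) • (List.ofFn fun i => Xf k n i (σ i)).prod

/-- Defining relations of `O_q(SL_{n+1})`. -/
inductive SLRel (k : Type) [Field k] (q : k) (n : ℕ) :
    FreeAlgebra k (Fin (n+1) × Fin (n+1)) → FreeAlgebra k (Fin (n+1) × Fin (n+1)) → Prop
  | row {i j m : Fin (n+1)} (h : j < m) :
      SLRel k q n (Xf k n i j * Xf k n i m) (q • (Xf k n i m * Xf k n i j))
  | col {i l j : Fin (n+1)} (h : i < l) :
      SLRel k q n (Xf k n i j * Xf k n l j) (q • (Xf k n l j * Xf k n i j))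
  | swap {i l j m : Fin (n+1)} (h1 : i < l) (h2 : m < j) :
      SLRel k q n (Xf k n i j * Xf k n l m) (Xf k n l m * Xf k n i j)
  | mixed {i l j m : Fin (n+1)} (h1 : i < l) (h2 : j < m) :
      SLRel k q n (Xf k n i j * Xf k n l m)
        (Xf k n l m * Xf k n i j + (q - q⁻¹) • (Xf k n i m * Xf k n l j))
  | det : SLRel k q n (qdet k q n) 1

/-- The quantized coordinate ring `O_q(SL_{n+1})`. -/
abbrev OqSL (k : Type) [Field k] (q : k) (n : ℕ) := RingQuot (SLRel k q n)

/-- The generator `X i j` of `O_q(SL_{n+1})`. -/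
def XSL (k : Type) [Field k] (q : k) (n : ℕ) (i j : Fin (n+1)) : OqSL k q n :=
  RingQuot.mkAlgHom k (SLRel k q n) (Xf k n i j)

/-- Relations `X i j = 0` for `i > j`, defining `O_q(B⁺)`. -/
inductive BpRel (k : Type) [Field k] (q : k) (n : ℕ) : OqSL k q n → OqSL k q n → Prop
  | zero {i j : Fin (n+1)} (h : j < i) : BpRel k q n (XSL k q n i j) 0

/-- Relations `X i j = 0` for `i < j`, defining `O_q(B⁻)`. -/
inductive BmRel (k : Type) [Field k] (q : k) (n : ℕ) : OqSL k q n → OqSL k q n → Prop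
  | zero {i j : Fin (n+1)} (h : i < j) : BmRel k q n (XSL k q n i j) 0

/-- Relations `X i j = 0` for `i ≠ j`, defining `O_q(T)`. -/
inductive TRel (k : Type) [Field k] (q : k) (n : ℕ) : OqSL k q n → OqSL k q n → Prop
  | zero {i j : Fin (n+1)} (h : i ≠ j) : TRel k q n (XSL k q n i j) 0

/-- The quantized coordinate ring `O_q(B⁺)` of the positive Borel. -/
abbrev OqBp (k : Type) [Field k] (q : k) (n : ℕ) := RingQuot (BpRel k q n)

/-- The quantized coordinate ring `O_q(B⁻)` of the negative Borel. -/
abbrev OqBm (k : Type) [Field k] (q : k) (n : ℕ) := RingQuot (BmRel k q n)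

/-- The quantized coordinate ring `O_q(T)` of the maximal torus. -/
abbrev OqT (k : Type) [Field k] (q : k) (n : ℕ) := RingQuot (TRel k q n)

/-- The coset of `X i j` in `O_q(B⁺)`. -/
def XBp (k : Type) [Field k] (q : k) (n : ℕ) (i j : Fin (n+1)) : OqBp k q n :=
  RingQuot.mkAlgHom k (BpRel k q n) (XSL k q n i j)

/-- The coset of `X i j` in `O_q(B⁻)`. -/
def XBm (k : Type) [Field k] (q : k) (n : ℕ) (i j : Fin (n+1)) : OqBm k q n :=
  RingQuot.mkAlgHom k (BmRel k q n) (XSL k q n i j)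

/-- The coset `Y i i` of `X i i` in `O_q(T)`. -/
def YT (k : Type) [Field k] (q : k) (n : ℕ) (i : Fin (n+1)) : OqT k q n :=
  RingQuot.mkAlgHom k (TRel k q n) (XSL k q n i i)

/-- `y i j = X_{ii}⁻¹ X_{ij}` in `O_q(B⁺)`. -/
def yY (k : Type) [Field k] (q : k) (n : ℕ) (i j : Fin (n+1)) : OqBp k q n :=
  Ring.inverse (XBp k q n i i) * XBp k q n i j

/-- `z i j = X_{ij} X_{jj}⁻¹` in `O_q(B⁺)`. -/
def zZ (k : Type) [Field k] (q : k) (n : ℕ) (i j : Fin (n+1)) : OqBp k q n :=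
  XBp k q n i j * Ring.inverse (XBp k q n j j)

/-- The subalgebra `O_q(N⁺)` of `O_q(B⁺)`, generated by the `X_{ii}⁻¹X_{ij}`, `i < j`. -/
def OqNp (k : Type) [Field k] (q : k) (n : ℕ) : Subalgebra k (OqBp k q n) :=
  Algebra.adjoin k {a | ∃ i j : Fin (n+1), i < j ∧ a = yY k q n i j}

/-- The subalgebra `O_q(N⁺)'` of `O_q(B⁺)`, generated by the `X_{ij}X_{jj}⁻¹`, `i < j`. -/
def OqNp' (k : Type) [Field k] (q : k) (n : ℕ) : Subalgebra k (OqBp k q n) :=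
  Algebra.adjoin k {a | ∃ i j : Fin (n+1), i < j ∧ a = zZ k q n i j}

/-- `X_{jj}⁻¹ X_{ji}` in `O_q(B⁻)` (for `i < j`). -/
def yNm (k : Type) [Field k] (q : k) (n : ℕ) (i j : Fin (n+1)) : OqBm k q n :=
  Ring.inverse (XBm k q n j j) * XBm k q n j i

/-- `X_{ji} X_{ii}⁻¹` in `O_q(B⁻)` (for `i < j`). -/
def zNm (k : Type) [Field k] (q : k) (n : ℕ) (i j : Fin (n+1)) : OqBm k q n :=
  XBm k q n j i * Ring.inverse (XBm k q n i i)

/-- The subalgebra `O_q(N⁻)` of `O_q(B⁻)`, generated by the `X_{jj}⁻¹X_{ji}`, `i < j`. -/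
def OqNm (k : Type) [Field k] (q : k) (n : ℕ) : Subalgebra k (OqBm k q n) :=
  Algebra.adjoin k {a | ∃ i j : Fin (n+1), i < j ∧ a = yNm k q n i j}

/-- The subalgebra `O_q(N⁻)'` of `O_q(B⁻)`, generated by the `X_{ji}X_{ii}⁻¹`, `i < j`. -/
def OqNm' (k : Type) [Field k] (q : k) (n : ℕ) : Subalgebra k (OqBm k q n) :=
  Algebra.adjoin k {a | ∃ i j : Fin (n+1), i < j ∧ a = zNm k q n i j}

end QSL

theorem Ring.inverse_eq_prod_erase {M : Type*} [MonoidWithZero M] [DecidableEq M] {l : List M}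
    (hl : ∀ x ∈ l, ∀ y ∈ l, Commute x y) (hprod : l.prod = 1) {a : M} (ha : a ∈ l) :
    Ring.inverse a = (l.erase a).prod := by
  have hright : a * (l.erase a).prod = 1 :=
    (List.prod_erase_of_comm ha fun x hx y hy => (hl x hx y hy).eq).trans hprod
  have hcomm : Commute a (l.erase a).prod :=
    Commute.list_prod_right _ _ fun x hx => hl a ha x (List.mem_of_mem_erase hx)
  exact Ring.inverse_unit ⟨a, _, hright, hcomm.eq ▸ hright⟩

theorem Equiv.Perm.exists_apply_lt_of_ne_one {m : ℕ} {σ : Equiv.Perm (Fin m)} (hσ : σ ≠ 1) :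
    ∃ i, σ i < i := by
  by_contra! hle
  obtain ⟨j, hj⟩ : ∃ j, σ j ≠ j := by simpa [Equiv.ext_iff] using hσ
  have hlt : ∑ i : Fin m, (i : ℕ) < ∑ i : Fin m, (σ i : ℕ) :=
    Finset.sum_lt_sum (fun i _ => hle i)
      ⟨j, Finset.mem_univ j, lt_of_le_of_ne (hle j) (Fin.val_injective.ne hj.symm)⟩
  exact hlt.ne (Equiv.sum_comp σ fun i => (i : ℕ)).symm

namespace QSL

theorem invCount_one {m : ℕ} : invCount (1 : Equiv.Perm (Fin m)) = 0 :=
  Finset.card_eq_zero.2 (Finset.filter_false_of_mem fun _ _ h => lt_asymm h.1 h.2)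

theorem sum_perm_smul_prod_eq_prod_diag {k M : Type*} [CommSemiring k] [Semiring M]
    [Module k M] {m : ℕ} (c : Equiv.Perm (Fin m) → k) (hc : c 1 = 1) (g : Fin m → Fin m → M)
    (hg : ∀ σ : Equiv.Perm (Fin m), σ ≠ 1 → ∃ i, g i (σ i) = 0) :
    ∑ σ, c σ • (List.ofFn fun i => g i (σ i)).prod = (List.ofFn fun i => g i i).prod := by
  rw [Finset.sum_eq_single_of_mem 1 (Finset.mem_univ _) fun σ _ hσ => ?_]
  · simp [hc]
  · obtain ⟨i, hi⟩ := hg σ hσ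
    rw [List.prod_eq_zero (List.mem_ofFn.2 ⟨i, hi⟩), smul_zero]

theorem map_qdet {k : Type} {A : Type*} [Field k] [Semiring A] [Algebra k A] (q : k) (n : ℕ)
    (f : FreeAlgebra k (Fin (n+1) × Fin (n+1)) →ₐ[k] A) :
    f (qdet k q n) = ∑ σ : Equiv.Perm (Fin (n+1)),
      ((-q) ^ invCount σ) • (List.ofFn fun i => f (Xf k n i (σ i))).prod := by
  simp only [qdet, map_sum, map_smul, map_list_prod, List.map_ofFn, Function.comp_def]

section DiagonalPoint

variable {k : Type} [Field k] {q : k} {n : ℕ} {A : Type*} [Semiring A] [Algebra k A]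
  (d : Fin (n+1) → A)

def freeDiagHom : FreeAlgebra k (Fin (n+1) × Fin (n+1)) →ₐ[k] A :=
  FreeAlgebra.lift k fun x => if x.1 = x.2 then d x.1 else 0

theorem freeDiagHom_Xf (i j : Fin (n+1)) :
    freeDiagHom (k := k) d (Xf k n i j) = if i = j then d i else 0 := by
  simp [freeDiagHom, Xf]

variable {d} (hd : ∀ i j, Commute (d i) (d j)) (hdet : (List.ofFn d).prod = 1)
include hd hdet

theorem freeDiagHom_rel ⦃x y : FreeAlgebra k (Fin (n+1) × Fin (n+1))⦄ (h : SLRel k q n x y) :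
    freeDiagHom d x = freeDiagHom d y := by
  cases h with
  | row h =>
    simp only [map_mul, map_smul, freeDiagHom_Xf]
    split_ifs <;> subst_vars <;> first | (exfalso; order) | simp
  | col h =>
    simp only [map_mul, map_smul, freeDiagHom_Xf]
    split_ifs <;> subst_vars <;> first | (exfalso; order) | simp
  | swap h1 h2 =>
    simp only [map_mul, freeDiagHom_Xf]
    split_ifs <;> subst_vars <;> first | (exfalso; order) | simp
  | mixed h1 h2 =>
    simp only [map_mul, map_add, map_smul, freeDiagHom_Xf]
    split_ifs <;> subst_vars <;> first | (exfalso; order) | simp [(hd _ _).eq]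
  | det =>
    rw [map_qdet, map_one, sum_perm_smul_prod_eq_prod_diag (fun σ => (-q) ^ invCount σ)
      (by simp [invCount_one]) fun i j => freeDiagHom d (Xf k n i j)]
    · simpa [freeDiagHom_Xf] using hdet
    · intro σ hσ
      obtain ⟨i, hi⟩ : ∃ i, σ i ≠ i := by simpa [Equiv.ext_iff] using hσ
      exact ⟨i, by simp [freeDiagHom_Xf, Ne.symm hi]⟩

variable (q)

def diagHom : OqSL k q n →ₐ[k] A :=
  RingQuot.liftAlgHom k ⟨freeDiagHom d, freeDiagHom_rel hd hdet⟩

theorem diagHom_XSL (i j : Fin (n+1)) :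
    diagHom q hd hdet (XSL k q n i j) = if i = j then d i else 0 := by
  rw [diagHom, XSL, RingQuot.liftAlgHom_mkAlgHom_apply, freeDiagHom_Xf]

theorem diagHom_rel ⦃x y : OqSL k q n⦄ (h : TRel k q n x y) :
    diagHom q hd hdet x = diagHom q hd hdet y := by
  obtain ⟨hij⟩ := h
  rw [diagHom_XSL, if_neg hij, map_zero]

def torusHom : OqT k q n →ₐ[k] A :=
  RingQuot.liftAlgHom k ⟨diagHom q hd hdet, diagHom_rel q hd hdet⟩

theorem torusHom_mkAlgHom (x : OqSL k q n) :
    torusHom q hd hdet (RingQuot.mkAlgHom k (TRel k q n) x) = diagHom q hd hdet x :=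
  RingQuot.liftAlgHom_mkAlgHom_apply _ _ _ _

theorem torusHom_YT (i : Fin (n+1)) : torusHom q hd hdet (YT k q n i) = d i := by
  rw [YT, torusHom_mkAlgHom, diagHom_XSL, if_pos rfl]

theorem range_torusHom :
    (torusHom q hd hdet).range =
      Algebra.adjoin k {a | ∃ i, a = d i ∨ a = Ring.inverse (d i)} := by
  classical
  apply le_antisymm
  · have hsurj : Function.Surjective
        ((RingQuot.mkAlgHom k (TRel k q n)).comp (RingQuot.mkAlgHom k (SLRel k q n))) :=
      (RingQuot.mkAlgHom_surjective _ _).comp (RingQuot.mkAlgHom_surjective _ _)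
    have hcomp : (torusHom q hd hdet).comp
        ((RingQuot.mkAlgHom k (TRel k q n)).comp (RingQuot.mkAlgHom k (SLRel k q n))) =
          freeDiagHom d := by
      ext ⟨i, j⟩
      simp [torusHom_mkAlgHom, diagHom, freeDiagHom]
    rw [← Algebra.map_top, ← (AlgHom.range_eq_top _).2 hsurj, ← AlgHom.range_comp, hcomp,
      freeDiagHom, ← Algebra.map_top, ← FreeAlgebra.adjoin_range_ι, AlgHom.map_adjoin,
      Algebra.adjoin_le_iff]
    rintro _ ⟨_, ⟨⟨i, j⟩, rfl⟩, rfl⟩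
    rw [FreeAlgebra.lift_ι_apply]
    split_ifs
    · exact Algebra.subset_adjoin ⟨i, Or.inl rfl⟩
    · exact Subalgebra.zero_mem _
  · rw [Algebra.adjoin_le_iff]
    have hmem : ∀ i, d i ∈ (torusHom q hd hdet).range :=
      fun i => ⟨YT k q n i, torusHom_YT q hd hdet i⟩
    rintro _ ⟨i, rfl | rfl⟩
    · exact hmem i
    · have hcomm : ∀ x ∈ List.ofFn d, ∀ y ∈ List.ofFn d, Commute x y := by
        simp only [List.mem_ofFn']
        rintro _ ⟨a, rfl⟩ _ ⟨b, rfl⟩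
        exact hd a b
      rw [Ring.inverse_eq_prod_erase hcomm hdet (List.mem_ofFn.2 ⟨i, rfl⟩)]
      refine Subalgebra.list_prod_mem _ fun x hx => ?_
      obtain ⟨j, rfl⟩ := List.mem_ofFn.1 (List.mem_of_mem_erase hx)
      exact hmem j

theorem comp_torusHom_eq_id (p : A →ₐ[k] OqT k q n) (hp : ∀ i, p (d i) = YT k q n i) :
    p.comp (torusHom q hd hdet) = AlgHom.id k (OqT k q n) := by
  ext ⟨i, j⟩
  change p (torusHom q hd hdet (RingQuot.mkAlgHom k _ (XSL k q n i j))) =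
    RingQuot.mkAlgHom k _ (XSL k q n i j)
  rw [torusHom_mkAlgHom, diagHom_XSL]
  split_ifs with hij
  · rw [hp, hij, YT]
  · rw [map_zero, RingQuot.mkAlgHom_rel k (TRel.zero hij), map_zero]

end DiagonalPoint

theorem XBp_eq_zero {k : Type} [Field k] {q : k} {n : ℕ} {i j : Fin (n+1)} (h : j < i) :
    XBp k q n i j = 0 :=
  (RingQuot.mkAlgHom_rel k (BpRel.zero h)).trans (map_zero _)

theorem XBp_diag_commute (k : Type) [Field k] (q : k) (n : ℕ) (i j : Fin (n+1)) :
    Commute (XBp k q n i i) (XBp k q n j j) := by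
  wlog hij : i < j generalizing i j
  · rcases (not_lt.1 hij).lt_or_eq with h | rfl
    · exact (this j i h).symm
    · exact Commute.refl _
  have h := congrArg (RingQuot.mkAlgHom k (BpRel k q n))
    (RingQuot.mkAlgHom_rel k (SLRel.mixed (q := q) (j := i) (m := j) hij hij))
  simp only [map_mul, map_add, map_smul] at h
  change XBp k q n i i * XBp k q n j j =
    XBp k q n j j * XBp k q n i i + (q - q⁻¹) • (XBp k q n i j * XBp k q n j i) at h
  rwa [XBp_eq_zero hij, mul_zero, smul_zero, add_zero] at h

theorem prod_XBp_diag (k : Type) [Field k] (q : k) (n : ℕ) :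
    (List.ofFn fun i => XBp k q n i i).prod = 1 := by
  have h := map_qdet q n ((RingQuot.mkAlgHom k (BpRel k q n)).comp (RingQuot.mkAlgHom k _))
  rw [AlgHom.comp_apply, RingQuot.mkAlgHom_rel k SLRel.det, map_one, map_one] at h
  change 1 = ∑ σ : Equiv.Perm (Fin (n+1)),
    _ • (List.ofFn fun i => XBp k q n i (σ i)).prod at h
  rw [sum_perm_smul_prod_eq_prod_diag (fun σ => (-q) ^ invCount σ) (by simp [invCount_one])
      fun i j => XBp k q n i j] at h
  · exact h.symm
  · intro σ hσ
    obtain ⟨i, hi⟩ := Equiv.Perm.exists_apply_lt_of_ne_one hσ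
    exact ⟨i, XBp_eq_zero hi⟩

end QSL

open QSL in
theorem section_r_plus_general (k : Type) [Field k] (q : k) (n : ℕ) :
    ∀ p : OqBp k q n →ₐ[k] OqT k q n,
      (∀ i : Fin (n+1), p (XBp k q n i i) = YT k q n i) →
      (∀ i j : Fin (n+1), i < j → p (XBp k q n i j) = 0) →
      ∃ r : OqT k q n →ₐ[k] OqBp k q n,
        (∀ i : Fin (n+1), r (YT k q n i) = XBp k q n i i) ∧
        Function.Injective r ∧
        r.range = Algebra.adjoin k
          {a : OqBp k q n | ∃ i : Fin (n+1),
            a = XBp k q n i i ∨ a = Ring.inverse (XBp k q n i i)} ∧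
        p.comp r = AlgHom.id k (OqT k q n) := by
  intro p hp _
  have hd := XBp_diag_commute k q n
  have hdet := prod_XBp_diag k q n
  have hpr := comp_torusHom_eq_id q hd hdet p hp
  exact ⟨torusHom q hd hdet, torusHom_YT q hd hdet,
    Function.LeftInverse.injective (g := p) (AlgHom.congr_fun hpr), range_torusHom q hd hdet, hpr⟩

open QSL in
/-- `Y_{ii} ↦ X_{ii}` extends to a `k`-algebra homomorphism `r⁺ : O_q(T) → O_q(B⁺)`,
which is injective, has image the subalgebra `L⁺` generated by the `X_{ii}` and `X_{ii}⁻¹`,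
and satisfies `p⁺ ∘ r⁺ = id` for the canonical projection `p⁺ : O_q(B⁺) → O_q(T)`. -/
theorem section_r_plus (k : Type) [Field k] (q : k) (hq0 : q ≠ 0)
    (hq : ∀ m : ℕ, 0 < m → q ^ m ≠ 1) (n : ℕ) (hn : 1 ≤ n) :
    ∀ p : OqBp k q n →ₐ[k] OqT k q n,
      (∀ i : Fin (n+1), p (XBp k q n i i) = YT k q n i) →
      (∀ i j : Fin (n+1), i < j → p (XBp k q n i j) = 0) →
      ∃ r : OqT k q n →ₐ[k] OqBp k q n,
        (∀ i : Fin (n+1), r (YT k q n i) = XBp k q n i i) ∧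
        Function.Injective r ∧
        r.range = Algebra.adjoin k
          {a : OqBp k q n | ∃ i : Fin (n+1),
            a = XBp k q n i i ∨ a = Ring.inverse (XBp k q n i i)} ∧
        p.comp r = AlgHom.id k (OqT k q n) :=
  section_r_plus_general k q n
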